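/- A function f(z) = z - Σ_{n≥2} a_n z^n with a_n ≥ 0 satisfies Re[ z f'(z) / (β z f'(z) + (1-β) f(z)) ] > α for all z ∈ U if and only if Σ_{n≥2} (n-α-(n-1)αβ) a_n ≤ 1-α. -/

import Mathlib

/-!
Write `f z = z - T z` with `T z = ∑ a (n + 2) z ^ (n + 2)`. Then `z f'` and the denominator
`β z f' + (1 - β) f` are `z` minus tail series with the nonnegative coefficients
`(n + 2) a (n + 2)` and `(1 + β (n + 1)) a (n + 2)`.

If `∑ dₙ a (n + 2) ≤ 1 - α` with `dₙ = n + 2 - α - (n + 1) α β`, then on `‖z‖ = r` the numerator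
`N = z f'` and the denominator `D` satisfy `‖N - D‖ ≤ (1 - β) ∑ (n + 1) a (n + 2) r ^ (n + 2)`, and
this is `< (1 - α) (r - ∑ (1 + β (n + 1)) a (n + 2) r ^ (n + 2)) ≤ (1 - α) ‖D‖` because the weights
combine exactly into `dₙ`; this forces `α < re (N / D)`.

Conversely, on the real segment `0 < r < 1` the quotient is real. Its denominator divided by `r` is
continuous on `[0, 1)`, equals `1` at `0` and never vanishes, hence is positive; clearing it gives
`r ∑ dₙ a (n + 2) rⁿ < 1 - α`, and letting `r → 1` bounds every partial sum of `∑ dₙ a (n + 2)`.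
-/

open Complex Filter Topology Metric Set

def ConvergesOnUnitDisc (c : ℕ → ℝ) : Prop :=
  ∀ r : ℝ, 0 ≤ r → r < 1 → Summable fun n => c n * r ^ n

namespace ConvergesOnUnitDisc

variable {c c' : ℕ → ℝ}

theorem summable_abs_mul_pow (hc : ConvergesOnUnitDisc c) {r : ℝ} (hr0 : 0 ≤ r) (hr1 : r < 1) :
    Summable fun n => |c n| * r ^ n := by
  simpa [abs_mul, abs_of_nonneg (pow_nonneg hr0 _)] using (hc r hr0 hr1).abs

theorem natCast_mul (hc : ConvergesOnUnitDisc c) : ConvergesOnUnitDisc fun n => n * c n := by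
  intro r hr0 hr1
  obtain ⟨s, hrs, hs1⟩ := exists_between hr1
  have hs0 : 0 < s := hr0.trans_lt hrs
  have hq : ‖r / s‖ < 1 := by
    rwa [Real.norm_eq_abs, abs_of_nonneg (by positivity), div_lt_one hs0]
  have hcs := hc.summable_abs_mul_pow hs0.le hs1
  have hbound : ∀ n, |c n| * s ^ n ≤ ∑' m, |c m| * s ^ m := fun n =>
    hcs.le_tsum n fun m _ => by positivity
  refine .of_norm_bounded ((summable_pow_mul_geometric_of_norm_lt_one 1 hq).mul_left
    (∑' m, |c m| * s ^ m)) fun n => ?_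
  calc ‖(n : ℝ) * c n * r ^ n‖ = (n * (r / s) ^ n) * (|c n| * s ^ n) := by
        rw [Real.norm_eq_abs, abs_mul, abs_mul, abs_of_nonneg (pow_nonneg hr0 _), div_pow,
          Nat.abs_cast]
        field_simp
    _ ≤ (n * (r / s) ^ n) * ∑' m, |c m| * s ^ m := by gcongr; exact hbound n
    _ = _ := by ring

theorem mul_affine (hc : ConvergesOnUnitDisc c) (x y : ℝ) {w : ℕ → ℝ}
    (hw : ∀ n, w n = x * n + y) : ConvergesOnUnitDisc fun n => w n * c n := fun r hr0 hr1 =>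
  (((hc.natCast_mul r hr0 hr1).mul_left x).add ((hc r hr0 hr1).mul_left y)).congr fun n => by
    simp only [hw]
    ring

theorem tsum_linear (hc : ConvergesOnUnitDisc c) (hc' : ConvergesOnUnitDisc c') {r : ℝ}
    (hr0 : 0 ≤ r) (hr1 : r < 1) (x y : ℝ) :
    x * ∑' n, c n * r ^ n + y * ∑' n, c' n * r ^ n = ∑' n, (x * c n + y * c' n) * r ^ n := by
  rw [← tsum_mul_left, ← tsum_mul_left,
    ← Summable.tsum_add ((hc r hr0 hr1).mul_left _) ((hc' r hr0 hr1).mul_left _)]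
  exact tsum_congr fun n => by ring

theorem continuousOn (hc : ConvergesOnUnitDisc c) :
    ContinuousOn (fun x => ∑' n, c n * x ^ n) (Ioo (-1) 1) := by
  intro x hx
  obtain ⟨s, hxs, hs1⟩ := exists_between (abs_lt.2 hx)
  have hcont : ContinuousOn (fun x => ∑' n, c n * x ^ n) (Ioo (-s) s) :=
    continuousOn_tsum (fun n => (continuous_const.mul (continuous_pow n)).continuousOn)
      (hc.summable_abs_mul_pow ((abs_nonneg x).trans hxs.le) hs1) fun n y hy => by
        rw [Real.norm_eq_abs, abs_mul, abs_pow]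
        gcongr
        exact (abs_lt.2 hy).le
  exact (hcont.continuousAt (Ioo_mem_nhds (abs_lt.1 hxs).1 (abs_lt.1 hxs).2)).continuousWithinAt

theorem summable_and_tsum_le_of_forall_mul_tsum_le (hc0 : ∀ n, 0 ≤ c n)
    (hc : ConvergesOnUnitDisc c) {B : ℝ} (hB : ∀ r, 0 < r → r < 1 → r * ∑' n, c n * r ^ n ≤ B) :
    Summable c ∧ ∑' n, c n ≤ B := by
  have hfin : ∀ t : Finset ℕ, ∑ n ∈ t, c n ≤ B := by
    intro t
    have hlim : Tendsto (fun r : ℝ => r * ∑ n ∈ t, c n * r ^ n) (𝓝[<] 1) (𝓝 (∑ n ∈ t, c n)) := by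
      have : Continuous fun r : ℝ => r * ∑ n ∈ t, c n * r ^ n := by fun_prop
      simpa using (this.tendsto 1).mono_left nhdsWithin_le_nhds
    refine le_of_tendsto hlim ?_
    filter_upwards [Ioo_mem_nhdsLT (zero_lt_one' ℝ)] with r ⟨hr0, hr1⟩
    calc r * ∑ n ∈ t, c n * r ^ n ≤ r * ∑' n, c n * r ^ n := by
          gcongr
          exact (hc r hr0.le hr1).sum_le_tsum t fun n _ => mul_nonneg (hc0 n) (by positivity)
      _ ≤ B := hB r hr0 hr1
  have hsum : Summable c := summable_of_sum_le hc0 hfin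
  exact ⟨hsum, hsum.tsum_le_of_sum_le hfin⟩

theorem of_summable_mul_pow_add_two
    (hc : ∀ z ∈ ball (0 : ℂ) 1, Summable fun n => (c n : ℂ) * z ^ (n + 2)) :
    ConvergesOnUnitDisc c := by
  intro r hr0 hr1
  rcases hr0.eq_or_lt with rfl | hr0
  · exact (summable_nat_add_iff 1).1 (by simp)
  have hsum : Summable fun n => c n * r ^ (n + 2) := by
    refine Complex.summable_ofReal.1 ((hc r ?_).congr fun n => by push_cast; rfl)
    rwa [mem_ball_zero_iff, Complex.norm_real, Real.norm_of_nonneg hr0.le]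
  exact (summable_mul_right_iff (pow_ne_zero 2 hr0.ne')).1 (hsum.congr fun n => by ring)

end ConvergesOnUnitDisc

theorem tsum_mul_pow_le_tsum {c : ℕ → ℝ} (hc0 : ∀ n, 0 ≤ c n) (hc : Summable c) {r : ℝ}
    (hr0 : 0 ≤ r) (hr1 : r ≤ 1) : ∑' n, c n * r ^ n ≤ ∑' n, c n :=
  have hle : ∀ n, c n * r ^ n ≤ c n := fun n => mul_le_of_le_one_right (hc0 n) (pow_le_one₀ hr0 hr1)
  (hc.of_nonneg_of_le (fun n => mul_nonneg (hc0 n) (pow_nonneg hr0 n)) hle).tsum_le_tsum hle hc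

theorem IsPreconnected.pos_of_ne_zero {X : Type*} [TopologicalSpace X] {s : Set X} {g : X → ℝ}
    (hs : IsPreconnected s) (hg : ContinuousOn g s) {a x : X} (ha : a ∈ s) (hga : 0 < g a)
    (hne : ∀ y ∈ s, g y ≠ 0) (hx : x ∈ s) : 0 < g x := by
  by_contra! hgx
  obtain ⟨y, hy, hgy⟩ := hs.intermediate_value hx ha hg ⟨hgx, hga.le⟩
  exact hne y hy hgy

theorem Complex.lt_re_div_of_norm_sub_lt {N D : ℂ} {α : ℝ} (h : ‖N - D‖ < (1 - α) * ‖D‖) :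
    α < (N / D).re := by
  have hD : D ≠ 0 := by
    rintro rfl
    simp only [norm_zero, mul_zero] at h
    exact (norm_nonneg _).not_gt h
  have hsplit : N / D = 1 + (N - D) / D := by field_simp; ring
  have hsmall : ‖(N - D) / D‖ < 1 - α := by
    rwa [norm_div, div_lt_iff₀ (norm_pos_iff.2 hD)]
  rw [hsplit, add_re, one_re]
  linarith [neg_abs_le ((N - D) / D).re, abs_re_le_norm ((N - D) / D)]

noncomputable def tailSeries (c : ℕ → ℝ) (z : ℂ) : ℂ :=
  ∑' n, (c n : ℂ) * z ^ (n + 2)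

section TailSeries

variable {c c' : ℕ → ℝ} {z : ℂ}

theorem summable_norm_tailSeries (hc : ConvergesOnUnitDisc c) (hz : ‖z‖ < 1) :
    Summable fun n => ‖(c n : ℂ) * z ^ (n + 2)‖ := by
  refine ((hc.summable_abs_mul_pow (norm_nonneg z) hz).mul_right (‖z‖ ^ 2)).congr fun n => ?_
  rw [norm_mul, norm_pow, Complex.norm_real, Real.norm_eq_abs, pow_add]
  ring

theorem tailSeries_linear (hc : ConvergesOnUnitDisc c) (hc' : ConvergesOnUnitDisc c')
    (hz : ‖z‖ < 1) (x y : ℝ) :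
    x * tailSeries c z + y * tailSeries c' z = tailSeries (fun n => x * c n + y * c' n) z := by
  rw [tailSeries, tailSeries, tailSeries, ← tsum_mul_left, ← tsum_mul_left,
    ← Summable.tsum_add ((summable_norm_tailSeries hc hz).of_norm.mul_left _)
      ((summable_norm_tailSeries hc' hz).of_norm.mul_left _)]
  refine tsum_congr fun n => ?_
  push_cast
  ring

theorem norm_tailSeries_le (hc0 : ∀ n, 0 ≤ c n) (hc : ConvergesOnUnitDisc c) (hz : ‖z‖ < 1) :
    ‖tailSeries c z‖ ≤ ‖z‖ ^ 2 * ∑' n, c n * ‖z‖ ^ n := by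
  refine (norm_tsum_le_tsum_norm (summable_norm_tailSeries hc hz)).trans_eq ?_
  rw [← tsum_mul_left]
  refine tsum_congr fun n => ?_
  rw [norm_mul, norm_pow, Complex.norm_real, Real.norm_eq_abs, abs_of_nonneg (hc0 n)]
  ring

theorem tailSeries_ofReal (r : ℝ) : tailSeries c r = ((r ^ 2 * ∑' n, c n * r ^ n : ℝ) : ℂ) := by
  rw [tailSeries, ← tsum_mul_left, Complex.ofReal_tsum]
  refine tsum_congr fun n => ?_
  push_cast
  ring

theorem hasDerivAt_tailSeries (hc : ConvergesOnUnitDisc fun n => ((n : ℝ) + 2) * c n)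
    (hz : ‖z‖ < 1) :
    HasDerivAt (tailSeries c) (∑' n : ℕ, (((n : ℝ) + 2) * c n : ℝ) * z ^ (n + 1)) z := by
  obtain ⟨s, hzs, hs1⟩ := exists_between hz
  refine hasDerivAt_tsum_of_isPreconnected
    (g' := fun n w => (((n : ℝ) + 2) * c n : ℝ) * w ^ (n + 1))
    ((hc.summable_abs_mul_pow ((norm_nonneg z).trans hzs.le) hs1).mul_left s) isOpen_ball
    (convex_ball (0 : ℂ) s).isPreconnected
    (g := fun n w => (c n : ℂ) * w ^ (n + 2)) (fun n w _ => ?_) (fun n w hw => ?_)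
    (mem_ball_self ((norm_nonneg z).trans_lt hzs)) (by simp) (by rwa [mem_ball_zero_iff])
  · exact ((hasDerivAt_pow (n + 2) w).const_mul (c n : ℂ)).congr_deriv (by push_cast; ring)
  · rw [mem_ball_zero_iff] at hw
    rw [norm_mul, norm_pow, Complex.norm_real, Real.norm_eq_abs, pow_succ]
    calc |((n : ℝ) + 2) * c n| * (‖w‖ ^ n * ‖w‖) ≤ |((n : ℝ) + 2) * c n| * (s ^ n * s) := by
          have := (norm_nonneg w).trans hw.le
          gcongr
      _ = s * (|((n : ℝ) + 2) * c n| * s ^ n) := by ring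

theorem mul_deriv_tailSeries (hc : ConvergesOnUnitDisc fun n => ((n : ℝ) + 2) * c n)
    (hz : ‖z‖ < 1) : z * deriv (tailSeries c) z = tailSeries (fun n => ((n : ℝ) + 2) * c n) z := by
  rw [(hasDerivAt_tailSeries hc hz).deriv, tailSeries, ← tsum_mul_left]
  refine tsum_congr fun n => ?_
  ring

end TailSeries

section Starlike

variable {f : ℂ → ℂ} {b : ℕ → ℝ} {z : ℂ}

theorem eq_sub_tailSeries
    (hf : ∀ z ∈ ball (0 : ℂ) 1, HasSum (fun n => (b n : ℂ) * z ^ (n + 2)) (z - f z))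
    (hz : z ∈ ball (0 : ℂ) 1) : f z = z - tailSeries b z := by
  rw [tailSeries, (hf z hz).tsum_eq]
  ring

theorem mul_deriv_eq_sub_tailSeries
    (hf : ∀ z ∈ ball (0 : ℂ) 1, HasSum (fun n => (b n : ℂ) * z ^ (n + 2)) (z - f z))
    (hb : ConvergesOnUnitDisc fun n => ((n : ℝ) + 2) * b n) (hz : z ∈ ball (0 : ℂ) 1) :
    z * deriv f z = z - tailSeries (fun n => ((n : ℝ) + 2) * b n) z := by
  have hz' : ‖z‖ < 1 := mem_ball_zero_iff.1 hz
  have hfeq : f =ᶠ[𝓝 z] fun w => w - tailSeries b w :=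
    Filter.eventually_of_mem (isOpen_ball.mem_nhds hz) fun w hw => eq_sub_tailSeries hf hw
  rw [hfeq.deriv_eq, ((hasDerivAt_id' z).fun_sub (hasDerivAt_tailSeries hb hz')).deriv, mul_sub,
    mul_one, ← (hasDerivAt_tailSeries hb hz').deriv, mul_deriv_tailSeries hb hz']

theorem mul_deriv_div_eq
    (hf : ∀ z ∈ ball (0 : ℂ) 1, HasSum (fun n => (b n : ℂ) * z ^ (n + 2)) (z - f z))
    (hb : ConvergesOnUnitDisc b) (hz : z ∈ ball (0 : ℂ) 1) (β : ℝ) :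
    z * deriv f z / (β * z * deriv f z + (1 - β) * f z) =
      (z - tailSeries (fun n => ((n : ℝ) + 2) * b n) z) /
        (z - tailSeries (fun n => (1 + β * ((n : ℝ) + 1)) * b n) z) := by
  have hB : ConvergesOnUnitDisc fun n => ((n : ℝ) + 2) * b n := hb.mul_affine 1 2 fun n => by ring
  have hW := tailSeries_linear hB hb (mem_ball_zero_iff.1 hz) β (1 - β)
  rw [show (fun n : ℕ => β * (((n : ℝ) + 2) * b n) + (1 - β) * b n) =
    fun n : ℕ => (1 + β * ((n : ℝ) + 1)) * b n from funext fun n => by ring] at hW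
  rw [← hW, mul_assoc, mul_deriv_eq_sub_tailSeries hf hB hz, eq_sub_tailSeries hf hz]
  congr 1
  push_cast
  ring

end Starlike

section Coefficients

variable {α β : ℝ} {b : ℕ → ℝ}

theorem add_two_sub_sub_mul_nonneg (hα1 : α < 1) (hβ0 : 0 ≤ β) (hβ1 : β < 1) (n : ℕ) :
    0 ≤ ((n : ℝ) + 2) - α - ((n : ℝ) + 1) * α * β := by
  have h : 0 ≤ ((n : ℝ) + 1) * ((1 - α) * β) := by have := sub_pos.2 hα1; positivity
  nlinarith

theorem lt_re_of_mul_tsum_lt (hα1 : α < 1) (hβ0 : 0 ≤ β) (hβ1 : β < 1) (hb0 : ∀ n, 0 ≤ b n)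
    (hb : ConvergesOnUnitDisc b) {z : ℂ} (hz : ‖z‖ < 1)
    (hlt : ‖z‖ ^ 2 * ∑' n : ℕ, (((n : ℝ) + 2) - α - ((n : ℝ) + 1) * α * β) * b n * ‖z‖ ^ n <
      (1 - α) * ‖z‖) :
    α < ((z - tailSeries (fun n => ((n : ℝ) + 2) * b n) z) /
      (z - tailSeries (fun n => (1 + β * ((n : ℝ) + 1)) * b n) z)).re := by
  set r := ‖z‖
  have hE : ConvergesOnUnitDisc fun n : ℕ => ((n : ℝ) + 1) * b n :=
    hb.mul_affine 1 1 fun n => by ring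
  have hW : ConvergesOnUnitDisc fun n : ℕ => (1 + β * ((n : ℝ) + 1)) * b n :=
    hb.mul_affine β (1 + β) fun n => by ring
  have hBWE : tailSeries (fun n => ((n : ℝ) + 2) * b n) z =
      tailSeries (fun n => (1 + β * ((n : ℝ) + 1)) * b n) z +
        (1 - β : ℝ) * tailSeries (fun n => ((n : ℝ) + 1) * b n) z := by
    rw [← one_mul (tailSeries (fun n : ℕ => (1 + β * ((n : ℝ) + 1)) * b n) z), ← ofReal_one,
      tailSeries_linear hW hE hz]
    congr 1
    funext n
    ring
  have hDWE := hE.tsum_linear hW (norm_nonneg z) hz (1 - β) (1 - α)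
  rw [show (fun n : ℕ => ((1 - β) * (((n : ℝ) + 1) * b n) +
      (1 - α) * ((1 + β * ((n : ℝ) + 1)) * b n)) * r ^ n) =
    fun n : ℕ => (((n : ℝ) + 2) - α - ((n : ℝ) + 1) * α * β) * b n * r ^ n from
      funext fun n => by ring] at hDWE
  refine Complex.lt_re_div_of_norm_sub_lt ?_
  calc ‖(z - tailSeries (fun n => ((n : ℝ) + 2) * b n) z) -
        (z - tailSeries (fun n => (1 + β * ((n : ℝ) + 1)) * b n) z)‖
      = (1 - β) * ‖tailSeries (fun n => ((n : ℝ) + 1) * b n) z‖ := by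
        rw [hBWE, show ∀ u v : ℂ, z - (u + v) - (z - u) = -v by intros; ring, norm_neg,
          norm_mul, Complex.norm_real, Real.norm_of_nonneg (by linarith)]
    _ ≤ (1 - β) * (r ^ 2 * ∑' n : ℕ, ((n : ℝ) + 1) * b n * r ^ n) :=
        mul_le_mul_of_nonneg_left
          (norm_tailSeries_le (fun n => by have := hb0 n; positivity) hE hz) (by linarith)
    _ < (1 - α) * (r - r ^ 2 * ∑' n : ℕ, (1 + β * ((n : ℝ) + 1)) * b n * r ^ n) := by
        linear_combination hlt + r ^ 2 * hDWE
    _ ≤ (1 - α) * ‖z - tailSeries (fun n => (1 + β * ((n : ℝ) + 1)) * b n) z‖ := by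
        refine mul_le_mul_of_nonneg_left ?_ (by linarith)
        refine (sub_le_sub_left (norm_tailSeries_le (fun n => ?_) hW hz) r).trans
          (norm_sub_norm_le _ _)
        have := hb0 n
        positivity

theorem lt_re_of_tsum_le (hα1 : α < 1) (hβ0 : 0 ≤ β) (hβ1 : β < 1) (hb0 : ∀ n, 0 ≤ b n)
    (hb : ConvergesOnUnitDisc b)
    (hsum : Summable fun n : ℕ => (((n : ℝ) + 2) - α - ((n : ℝ) + 1) * α * β) * b n)
    (hle : ∑' n : ℕ, (((n : ℝ) + 2) - α - ((n : ℝ) + 1) * α * β) * b n ≤ 1 - α)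
    {z : ℂ} (hz : ‖z‖ < 1) (hz0 : z ≠ 0) :
    α < ((z - tailSeries (fun n => ((n : ℝ) + 2) * b n) z) /
      (z - tailSeries (fun n => (1 + β * ((n : ℝ) + 1)) * b n) z)).re := by
  have hr0 : 0 < ‖z‖ := norm_pos_iff.2 hz0
  refine lt_re_of_mul_tsum_lt hα1 hβ0 hβ1 hb0 hb hz ?_
  calc _ ≤ ‖z‖ ^ 2 * (1 - α) := by
        refine mul_le_mul_of_nonneg_left ?_ (by positivity)
        exact (tsum_mul_pow_le_tsum
          (fun n => mul_nonneg (add_two_sub_sub_mul_nonneg hα1 hβ0 hβ1 n) (hb0 n)) hsum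
          hr0.le hz.le).trans hle
    _ < (1 - α) * ‖z‖ := by nlinarith [mul_pos (sub_pos.2 hα1) (mul_pos hr0 (sub_pos.2 hz))]

theorem mul_tsum_lt_of_lt_div (hb : ConvergesOnUnitDisc b) {r : ℝ} (hr0 : 0 < r) (hr1 : r < 1)
    (hq : 0 < 1 - r * ∑' n : ℕ, (1 + β * ((n : ℝ) + 1)) * b n * r ^ n)
    (h : α < (r - r ^ 2 * ∑' n : ℕ, ((n : ℝ) + 2) * b n * r ^ n) /
      (r * (1 - r * ∑' n : ℕ, (1 + β * ((n : ℝ) + 1)) * b n * r ^ n))) :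
    r * ∑' n : ℕ, (((n : ℝ) + 2) - α - ((n : ℝ) + 1) * α * β) * b n * r ^ n < 1 - α := by
  have hB : ConvergesOnUnitDisc fun n : ℕ => ((n : ℝ) + 2) * b n :=
    hb.mul_affine 1 2 fun n => by ring
  have hW : ConvergesOnUnitDisc fun n : ℕ => (1 + β * ((n : ℝ) + 1)) * b n :=
    hb.mul_affine β (1 + β) fun n => by ring
  have hlin := hB.tsum_linear hW hr0.le hr1 1 (-α)
  rw [show (fun n : ℕ => (1 * (((n : ℝ) + 2) * b n) + -α * ((1 + β * ((n : ℝ) + 1)) * b n)) *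
      r ^ n) = fun n : ℕ => (((n : ℝ) + 2) - α - ((n : ℝ) + 1) * α * β) * b n * r ^ n from
    funext fun n => by ring] at hlin
  rw [← hlin]
  nlinarith [(lt_div_iff₀ (mul_pos hr0 hq)).1 h]

theorem summable_and_tsum_le_of_lt_re (hα0 : 0 ≤ α) (hα1 : α < 1) (hβ0 : 0 ≤ β) (hβ1 : β < 1)
    (hb0 : ∀ n, 0 ≤ b n) (hb : ConvergesOnUnitDisc b)
    (h : ∀ r : ℝ, 0 < r → r < 1 → α < (((r : ℂ) - tailSeries (fun n => ((n : ℝ) + 2) * b n) r) /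
      ((r : ℂ) - tailSeries (fun n => (1 + β * ((n : ℝ) + 1)) * b n) r)).re) :
    (Summable fun n : ℕ => (((n : ℝ) + 2) - α - ((n : ℝ) + 1) * α * β) * b n) ∧
      ∑' n : ℕ, (((n : ℝ) + 2) - α - ((n : ℝ) + 1) * α * β) * b n ≤ 1 - α := by
  have hW : ConvergesOnUnitDisc fun n : ℕ => (1 + β * ((n : ℝ) + 1)) * b n :=
    hb.mul_affine β (1 + β) fun n => by ring
  set q : ℝ → ℝ := fun x => 1 - x * ∑' n : ℕ, (1 + β * ((n : ℝ) + 1)) * b n * x ^ n with hq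
  have hreal : ∀ r, 0 < r → r < 1 →
      α < (r - r ^ 2 * ∑' n : ℕ, ((n : ℝ) + 2) * b n * r ^ n) / (r * q r) := by
    intro r hr0 hr1
    have := h r hr0 hr1
    rwa [tailSeries_ofReal, tailSeries_ofReal, ← ofReal_sub, ← ofReal_sub, ← ofReal_div, ofReal_re,
      show r - r ^ 2 * ∑' n : ℕ, (1 + β * ((n : ℝ) + 1)) * b n * r ^ n = r * q r by ring] at this
  have hq_pos : ∀ r ∈ Ico (0 : ℝ) 1, 0 < q r := fun r hr => by
    refine isPreconnected_Ico.pos_of_ne_zero (g := q) ?_ (left_mem_Ico.2 one_pos) (by simp [hq])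
      ?_ hr
    · exact continuousOn_const.sub (continuousOn_id.mul (hW.continuousOn.mono fun x hx =>
        ⟨by linarith [hx.1], hx.2⟩))
    rintro x ⟨hx0, hx1⟩ hqx
    rcases hx0.eq_or_lt with rfl | hx0
    · simp [hq] at hqx
    -- a vanishing denominator makes the quotient `x / 0 = 0`, contradicting `0 ≤ α`
    have := hreal x hx0 hx1
    rw [hqx, mul_zero, div_zero] at this
    linarith
  have hD : ConvergesOnUnitDisc fun n : ℕ => (((n : ℝ) + 2) - α - ((n : ℝ) + 1) * α * β) * b n :=
    hb.mul_affine (1 - α * β) (2 - α - α * β) fun n => by ring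
  exact hD.summable_and_tsum_le_of_forall_mul_tsum_le
    (fun n => mul_nonneg (add_two_sub_sub_mul_nonneg hα1 hβ0 hβ1 n) (hb0 n)) fun r hr0 hr1 =>
      (mul_tsum_lt_of_lt_div hb hr0 hr1 (hq_pos r ⟨hr0.le, hr1⟩) (hreal r hr0 hr1)).le

end Coefficients

theorem stmt7 (α β : ℝ) (hα0 : 0 ≤ α) (hα1 : α < 1) (hβ0 : 0 ≤ β) (hβ1 : β < 1)
    (f : ℂ → ℂ) (a : ℕ → ℝ) (ha : ∀ n, 0 ≤ a n)
    (hf : ∀ z ∈ Metric.ball (0 : ℂ) 1,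
      HasSum (fun n : ℕ => ((a (n + 2) : ℝ) : ℂ) * z ^ (n + 2)) (z - f z)) :
    (∀ z ∈ Metric.ball (0 : ℂ) 1, z ≠ 0 →
      α < ((z * deriv f z /
        ((β : ℂ) * z * deriv f z + (1 - (β : ℂ)) * f z)).re)) ↔
    (Summable (fun n : ℕ =>
      (((n : ℝ) + 2) - α - ((n : ℝ) + 1) * α * β) * a (n + 2)) ∧
    ∑' n : ℕ, (((n : ℝ) + 2) - α - ((n : ℝ) + 1) * α * β) * a (n + 2) ≤ 1 - α) := by
  have hb : ConvergesOnUnitDisc fun n => a (n + 2) :=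
    .of_summable_mul_pow_add_two fun z hz => (hf z hz).summable
  have hquot := fun z (hz : z ∈ ball (0 : ℂ) 1) => mul_deriv_div_eq hf hb hz β
  have hb0 : ∀ n, 0 ≤ a (n + 2) := fun n => ha (n + 2)
  constructor
  · intro h
    refine summable_and_tsum_le_of_lt_re hα0 hα1 hβ0 hβ1 hb0 hb fun r hr0 hr1 => ?_
    have hr : (r : ℂ) ∈ ball (0 : ℂ) 1 := by
      rwa [mem_ball_zero_iff, Complex.norm_real, Real.norm_of_nonneg hr0.le]
    rw [← hquot r hr]
    exact h r hr (ofReal_ne_zero.2 hr0.ne')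
  · rintro ⟨hsum, hle⟩ z hz hz0
    rw [hquot z hz]
    exact lt_re_of_tsum_le hα1 hβ0 hβ1 hb0 hb hsum hle (mem_ball_zero_iff.1 hz) hz0
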